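/- Let $D \subset \mathbb{C}^n$ be an unbounded convex open set whose only directions at infinity are $v$ and $-v$ for some unit vector $v$. Then there exists $R_0 > 0$ such that for all $R \geq R_0$ the set $D \setminus \overline{B(0,R)}$ has at least two distinct unbounded connected components. -/

import Mathlib

/-!
Since `v` and `-v` are directions at infinity, `D` is invariant under translation along `ℝ v`.
No unit vector orthogonal (for `Re ⟪·, ·⟫`) to `v` is a direction at infinity, so the convex slice
`D ∩ {Re ⟪v, z⟫ = 0}` contains no ray in its closure and, in finite dimension, is therefore
bounded, say by `M`. For `R ≥ M` the set `D \ B̄(0, R)` misses the hyperplane `Re ⟪v, z⟫ = 0`,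
while the line through a point of `D` in direction `v` leaves the ball on both sides of it; by the
intermediate value theorem the two ends lie in different, unbounded, components.
-/

open Bornology Metric Set Filter Topology

section RecessionDirection

variable {E : Type*} [NormedAddCommGroup E] [NormedSpace ℝ E]

def IsRecessionDirection (D : Set E) (u : E) : Prop :=
  ∀ z ∈ D, ∀ t : ℝ, 0 ≤ t → z + t • u ∈ D

/-- `z + t • u` is a convex combination of a point of `D` close to `z` and a far-away point of the
ray. -/
theorem IsOpen.isRecessionDirection_of_ray_subset_closure {D : Set E} (hopen : IsOpen D)
    (hconv : Convex ℝ D) {z₀ u : E} (hray : ∀ t : ℝ, 0 ≤ t → z₀ + t • u ∈ closure D) :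
    IsRecessionDirection D u := by
  intro z hz t ht
  have hcont : ContinuousAt (fun l : ℝ => (1 - l)⁻¹ • (z - l • z₀)) 0 := by
    fun_prop (disch := norm_num)
  have hnear : ∀ᶠ l in 𝓝 (0 : ℝ), (1 - l)⁻¹ • (z - l • z₀) ∈ D :=
    hcont.eventually_mem (by simpa using hopen.mem_nhds hz)
  obtain ⟨l, hlD, hl0, hl1⟩ :=
    ((hnear.filter_mono nhdsWithin_le_nhds).and (Ioo_mem_nhdsGT one_pos)).exists
  have hcomb := hconv.combo_interior_closure_mem_interior (by rwa [hopen.interior_eq])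
    (hray (t / l) (div_nonneg ht hl0.le)) (sub_pos.2 hl1) hl0.le (sub_add_cancel 1 l)
  rw [hopen.interior_eq] at hcomb
  convert hcomb using 1
  rw [smul_smul, mul_inv_cancel₀ (sub_pos.2 hl1).ne', one_smul, smul_add, smul_smul,
    mul_div_cancel₀ t hl0.ne']
  abel

/-- The directions `(y - w₀) / ‖y - w₀‖` for `y ∈ S` far away accumulate, by compactness of the
unit sphere, at a direction whose ray from `w₀` stays in `closure S`. -/
theorem Convex.exists_unit_ray_subset_closure [FiniteDimensional ℝ E] {S : Set E}
    (hconv : Convex ℝ S) (hunb : ¬IsBounded S) {w₀ : E} (hw₀ : w₀ ∈ S) :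
    ∃ u : E, ‖u‖ = 1 ∧ ∀ t : ℝ, 0 ≤ t → w₀ + t • u ∈ closure S := by
  have hfar : ∀ k : ℕ, ∃ y ∈ S, (k : ℝ) < ‖y - w₀‖ := fun k => by
    by_contra! h
    exact hunb ((isBounded_iff_subset_closedBall w₀).2
      ⟨k, fun y hy => mem_closedBall_iff_norm.2 (h y hy)⟩)
  choose y hyS hy using hfar
  have hpos : ∀ k, 0 < ‖y k - w₀‖ := fun k => (Nat.cast_nonneg k).trans_lt (hy k)
  set U : ℕ → E := fun k => ‖y k - w₀‖⁻¹ • (y k - w₀)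
  have hU : ∀ k, U k ∈ sphere (0 : E) 1 := fun k => by
    simp [U, norm_smul, (hpos k).ne']
  obtain ⟨u, hu, φ, hφ, hlim⟩ := (isCompact_sphere (0 : E) 1).tendsto_subseq hU
  refine ⟨u, mem_sphere_zero_iff_norm.1 hu, fun t ht => ?_⟩
  have hdist : Tendsto (fun k => ‖y (φ k) - w₀‖) atTop atTop :=
    (tendsto_atTop_mono (fun k => (hy k).le) tendsto_natCast_atTop_atTop).comp hφ.tendsto_atTop
  refine mem_closure_of_tendsto (tendsto_const_nhds.add (hlim.const_smul t)) ?_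
  filter_upwards [hdist.eventually_ge_atTop t] with k hk
  have hμ : t / ‖y (φ k) - w₀‖ ∈ Icc (0 : ℝ) 1 :=
    ⟨div_nonneg ht (hpos _).le, div_le_one_of_le₀ hk (hpos _).le⟩
  convert hconv.add_smul_sub_mem hw₀ (hyS (φ k)) hμ using 2
  simp only [Function.comp_apply, U, smul_smul, div_eq_mul_inv]

theorem Convex.isBounded_inter_preimage_singleton [FiniteDimensional ℝ E] {D : Set E}
    (hopen : IsOpen D) (hconv : Convex ℝ D) (f : E →L[ℝ] ℝ)
    (hf : ∀ u : E, ‖u‖ = 1 → IsRecessionDirection D u → f u ≠ 0) (c : ℝ) :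
    IsBounded (D ∩ f ⁻¹' {c}) := by
  by_contra hunb
  have hSconv : Convex ℝ (D ∩ f ⁻¹' {c}) :=
    hconv.inter ((convex_singleton c).linear_preimage f.toLinearMap)
  obtain ⟨w₀, hw₀D, hw₀f⟩ := nonempty_of_not_isBounded hunb
  obtain ⟨u, hu, hray⟩ := hSconv.exists_unit_ray_subset_closure hunb ⟨hw₀D, hw₀f⟩
  have hclosure : closure (D ∩ f ⁻¹' {c}) ⊆ closure D ∩ f ⁻¹' {c} :=
    closure_minimal (inter_subset_inter_left _ subset_closure)
      (isClosed_closure.inter (isClosed_singleton.preimage f.continuous))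
  have hrec := hopen.isRecessionDirection_of_ray_subset_closure hconv
    (fun t ht => (hclosure (hray t ht)).1)
  have hfu : f (w₀ + (1 : ℝ) • u) = c := (hclosure (hray 1 zero_le_one)).2
  simp only [one_smul, map_add, mem_preimage, mem_singleton_iff] at hfu hw₀f
  exact hf u hu hrec (by linarith)

end RecessionDirection

theorem connectedComponentIn_ne_of_forall_ne_zero {X : Type*} [TopologicalSpace X] {F : Set X}
    {f : X → ℝ} (hf : ContinuousOn f F) (hF : ∀ z ∈ F, f z ≠ 0) {x y : X} (hx : x ∈ F)
    (hy : y ∈ F) (hfx : f x < 0) (hfy : 0 < f y) :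
    connectedComponentIn F x ≠ connectedComponentIn F y := by
  intro hxy
  have hyC : y ∈ connectedComponentIn F x := hxy ▸ mem_connectedComponentIn hy
  obtain ⟨z, hzC, hz⟩ := isPreconnected_connectedComponentIn.intermediate_value
    (mem_connectedComponentIn hx) hyC (hf.mono (connectedComponentIn_subset F x))
    ⟨hfx.le, hfy.le⟩
  exact hF z (connectedComponentIn_subset F x hzC) hz

theorem not_isBounded_connectedComponentIn {X : Type*} [PseudoMetricSpace X] {F S : Set X}
    {x : X} (hS : IsPreconnected S) (hSF : S ⊆ F) (hx : x ∈ S) (hunb : ¬IsBounded S) :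
    ¬IsBounded (connectedComponentIn F x) :=
  fun h => hunb (h.subset (hS.subset_connectedComponentIn hx hSF))

theorem exists_ne_unbounded_connectedComponentIn {E : Type*} [NormedAddCommGroup E]
    [NormedSpace ℝ E] {F : Set E} (f : E →L[ℝ] ℝ) (hF : ∀ z ∈ F, f z ≠ 0) {p : ℝ → E}
    (hp : Continuous p) (hfp : ∀ s, f (p s) = s) {a : ℝ} (hpF : ∀ s, a < |s| → p s ∈ F) :
    ∃ x ∈ F, ∃ y ∈ F, ¬IsBounded (connectedComponentIn F x) ∧
      ¬IsBounded (connectedComponentIn F y) ∧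
        connectedComponentIn F x ≠ connectedComponentIn F y := by
  have hunb : ∀ I : Set ℝ, ¬IsBounded I → ¬IsBounded (p '' I) := fun I hI h => hI <| by
    simpa [image_image, hfp] using f.lipschitz.isBounded_image h
  have hneg : p '' Iio (-|a|) ⊆ F := image_subset_iff.2 fun s hs =>
    hpF s (by linarith [le_abs_self a, neg_le_abs s, mem_Iio.1 hs])
  have hpos : p '' Ioi |a| ⊆ F := image_subset_iff.2 fun s hs =>
    hpF s (by linarith [le_abs_self a, le_abs_self s, mem_Ioi.1 hs])
  refine ⟨p (-|a| - 1), hneg ⟨_, by simp, rfl⟩, p (|a| + 1), hpos ⟨_, by simp, rfl⟩,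
    not_isBounded_connectedComponentIn (isPreconnected_Iio.image p hp.continuousOn) hneg
      ⟨_, by simp, rfl⟩ (hunb _ fun h => not_bddBelow_Iio _ h.bddBelow),
    not_isBounded_connectedComponentIn (isPreconnected_Ioi.image p hp.continuousOn) hpos
      ⟨_, by simp, rfl⟩ (hunb _ fun h => not_bddAbove_Ioi _ h.bddAbove),
    connectedComponentIn_ne_of_forall_ne_zero f.continuous.continuousOn hF
      (hneg ⟨_, by simp, rfl⟩) (hpos ⟨_, by simp, rfl⟩) ?_ ?_⟩
  · rw [hfp]; linarith [abs_nonneg a]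
  · rw [hfp]; linarith [abs_nonneg a]

theorem stmt_5_general (n : ℕ) (D : Set (EuclideanSpace ℂ (Fin n)))
    (hopen : IsOpen D) (hconv : Convex ℝ D) (hunb : ¬ Bornology.IsBounded D)
    (v : EuclideanSpace ℂ (Fin n))
    (hdirs : ∀ u : EuclideanSpace ℂ (Fin n),
      (‖u‖ = 1 ∧ ∀ z ∈ D, ∀ t : ℝ, 0 ≤ t → z + t • u ∈ D) ↔ (u = v ∨ u = -v)) :
    ∃ R₀ : ℝ, 0 < R₀ ∧ ∀ R : ℝ, R₀ ≤ R →
      ∃ x ∈ D \ Metric.closedBall 0 R, ∃ y ∈ D \ Metric.closedBall 0 R,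
        ¬ Bornology.IsBounded (connectedComponentIn (D \ Metric.closedBall 0 R) x) ∧
        ¬ Bornology.IsBounded (connectedComponentIn (D \ Metric.closedBall 0 R) y) ∧
        connectedComponentIn (D \ Metric.closedBall 0 R) x ≠
          connectedComponentIn (D \ Metric.closedBall 0 R) y := by
  obtain ⟨hv, hv_rec⟩ := (hdirs v).2 (Or.inl rfl)
  have hline : ∀ z ∈ D, ∀ s : ℝ, z + s • v ∈ D := by
    intro z hz s
    rcases le_total 0 s with hs | hs
    · exact hv_rec z hz s hs
    · simpa using ((hdirs (-v)).2 (Or.inr rfl)).2 z hz (-s) (neg_nonneg.2 hs)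
  set f : EuclideanSpace ℂ (Fin n) →L[ℝ] ℝ := innerSL ℝ v
  have hfv : f v = 1 := by simp [f, hv]
  have hf_le : ∀ z, |f z| ≤ ‖z‖ := fun z => by simpa [f, hv] using abs_real_inner_le_norm v z
  have hslice : IsBounded (D ∩ f ⁻¹' {0}) := by
    refine hconv.isBounded_inter_preimage_singleton hopen f (fun u hu hrec => ?_) 0
    rcases (hdirs u).1 ⟨hu, hrec⟩ with rfl | rfl <;> simp [hfv]
  obtain ⟨M, hM⟩ := hslice.subset_closedBall 0
  obtain ⟨z₀, hz₀⟩ := nonempty_of_not_isBounded hunb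
  refine ⟨max M 1, by positivity, fun R hR => ?_⟩
  refine exists_ne_unbounded_connectedComponentIn f (a := R) (p := fun s => z₀ + (s - f z₀) • v)
    (fun z hz hfz => hz.2 (closedBall_subset_closedBall (le_of_max_le_left hR) (hM ⟨hz.1, hfz⟩)))
    (by fun_prop) (fun s => by simp [hfv]) (fun s hs => ⟨hline z₀ hz₀ _, ?_⟩)
  rw [mem_closedBall_zero_iff, not_le]
  calc R < |s| := hs
    _ = |f (z₀ + (s - f z₀) • v)| := by simp [hfv]
    _ ≤ _ := hf_le _

theorem stmt_5 (n : ℕ) (D : Set (EuclideanSpace ℂ (Fin n)))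
    (hopen : IsOpen D) (hconv : Convex ℝ D) (hunb : ¬ Bornology.IsBounded D)
    (v : EuclideanSpace ℂ (Fin n)) (hv : ‖v‖ = 1)
    (hdirs : ∀ u : EuclideanSpace ℂ (Fin n),
      (‖u‖ = 1 ∧ ∀ z ∈ D, ∀ t : ℝ, 0 ≤ t → z + t • u ∈ D) ↔ (u = v ∨ u = -v)) :
    ∃ R₀ : ℝ, 0 < R₀ ∧ ∀ R : ℝ, R₀ ≤ R →
      ∃ x ∈ D \ Metric.closedBall 0 R, ∃ y ∈ D \ Metric.closedBall 0 R,
        ¬ Bornology.IsBounded (connectedComponentIn (D \ Metric.closedBall 0 R) x) ∧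
        ¬ Bornology.IsBounded (connectedComponentIn (D \ Metric.closedBall 0 R) y) ∧
        connectedComponentIn (D \ Metric.closedBall 0 R) x ≠
          connectedComponentIn (D \ Metric.closedBall 0 R) y :=
  stmt_5_general n D hopen hconv hunb v hdirs
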